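/- arXiv:0903.0121 — 3 statements merged into one kernel-verified Lean document; each statement's English description precedes it below -/
import Mathlib

section
/- Let E and F be finite-dimensional real normed vector spaces, x ∈ E, p ∈ F, and let Φ be a path-lifting map based at (x,p). If α, β : ℝ → E are smooth paths with α(0) = β(0) = x and deriv α 0 = deriv β 0, then deriv (Φ α) 0 = deriv (Φ β) 0. (This is the key Lemma of the paper, stated for the trivializable setting: the initial velocity of the lifted path depends only on the initial velocity of the path downstairs.) -/
/-- A path-lifting map based at `(x, p)` for normed spaces `E` and `F`:
it assigns to each smooth path `α : ℝ → E` starting at `x` a path `Φ α : ℝ → F`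
starting at `p`, sends the constant path to the constant path, is invariant under
scaling reparametrizations, and is smooth in families. -/
structure PathLiftingMap (E F : Type*) [NormedAddCommGroup E] [NormedSpace ℝ E]
    [NormedAddCommGroup F] [NormedSpace ℝ F] (x : E) (p : F) where
  lift : (ℝ → E) → (ℝ → F)
  lift_init : ∀ α : ℝ → E, ContDiff ℝ (⊤ : ℕ∞) α → α 0 = x → lift α 0 = p
  lift_const : lift (fun _ => x) = fun _ => p
  lift_scale : ∀ ε : ℝ, ε ∈ Set.Icc (0 : ℝ) 1 → ∀ α : ℝ → E, ContDiff ℝ (⊤ : ℕ∞) α → α 0 = x →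
    lift (fun t => α (ε * t)) = fun t => lift α (ε * t)
  lift_smooth_families : ∀ k : ℕ, ∀ A : EuclideanSpace ℝ (Fin k) × ℝ → E,
    ContDiff ℝ (⊤ : ℕ∞) A → (∀ s : EuclideanSpace ℝ (Fin k), A (s, 0) = x) →
    ContDiff ℝ (⊤ : ℕ∞) (fun q : EuclideanSpace ℝ (Fin k) × ℝ => lift (fun t => A (q.1, t)) q.2)

section AuxLemmas

variable {F : Type*} [NormedAddCommGroup F] [NormedSpace ℝ F]

/-- If a differentiable function agrees with `s • c` on `[0,1]`, its derivative at `0` is `c`. -/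
lemma PLM.deriv_eq_of_icc {g : ℝ → F} (hg : DifferentiableAt ℝ g 0) {c : F}
    (h : ∀ s ∈ Set.Icc (0:ℝ) 1, g s = s • c) : deriv g 0 = c := by
  have h1 : HasDerivWithinAt g (deriv g 0) (Set.Ici 0) 0 :=
    hg.hasDerivAt.hasDerivWithinAt
  have hl : HasDerivWithinAt (fun s : ℝ => s • c) c (Set.Ici 0) 0 := by
    simpa using ((hasDerivAt_id (0:ℝ)).smul_const c).hasDerivWithinAt
  have hmem : Set.Icc (0:ℝ) 1 ∈ nhdsWithin (0:ℝ) (Set.Ici 0) := by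
    rw [← Set.Ici_inter_Iic]
    exact inter_mem_nhdsWithin _ (Iic_mem_nhds one_pos)
  have hev : g =ᶠ[nhdsWithin (0:ℝ) (Set.Ici 0)] (fun s : ℝ => s • c) :=
    Filter.eventuallyEq_of_mem hmem (fun s hs => h s hs)
  have h2 : HasDerivWithinAt g c (Set.Ici 0) 0 :=
    hl.congr_of_eventuallyEq hev (by simpa using h 0 ⟨le_refl 0, zero_le_one⟩)
  exact ((uniqueDiffOn_Ici (0:ℝ)) 0 Set.self_mem_Ici).eq_deriv _ h1 h2

/-- Chain rule packaging: the derivative of `g ∘ c` at `0` identifies `fderiv g 0` applied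
to the initial velocity of `c`, provided `g ∘ c` agrees with `s • cF` on `[0,1]`. -/
lemma PLM.key {P : Type*} [NormedAddCommGroup P] [NormedSpace ℝ P]
    {g : P → F} (hg : DifferentiableAt ℝ g 0) {c : ℝ → P} {v : P}
    (hc : HasDerivAt c v 0) (hc0 : c 0 = 0) {cF : F}
    (h : ∀ s ∈ Set.Icc (0:ℝ) 1, g (c s) = s • cF) : fderiv ℝ g 0 v = cF := by
  have hgf : HasFDerivAt g (fderiv ℝ g 0) (c 0) := by rw [hc0]; exact hg.hasFDerivAt
  have hd : HasDerivAt (fun s => g (c s)) (fderiv ℝ g 0 v) 0 :=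
    hgf.comp_hasDerivAt 0 hc
  rw [← hd.deriv]
  exact PLM.deriv_eq_of_icc hd.differentiableAt h

lemma PLM.contDiff_intervalIntegral {E : Type*} [NormedAddCommGroup E] [NormedSpace ℝ E]
    [CompleteSpace E] (n : ℕ) : ∀ ψ : ℝ × ℝ → E, ContDiff ℝ (⊤ : ℕ∞) ψ →
    ContDiff ℝ n (fun t => ∫ s in (0:ℝ)..1, ψ (t, s)) := by
  induction n with
  | zero =>
    intro ψ hψ
    rw [Nat.cast_zero, contDiff_zero]
    exact intervalIntegral.continuous_parametric_intervalIntegral_of_continuous'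
      (f := fun t s => ψ (t, s)) hψ.continuous 0 1
  | succ n ih =>
    intro ψ hψ
    set ψ' : ℝ × ℝ → E := fun q => fderiv ℝ ψ q (1, 0) with hψ'
    have hψ'c : ContDiff ℝ (⊤ : ℕ∞) ψ' :=
      (hψ.fderiv_right (m := (⊤ : ℕ∞)) (by simp)).clm_apply contDiff_const
    have hderiv : ∀ x t : ℝ, HasDerivAt (fun x => ψ (x, t)) (ψ' (x, t)) x := by
      intro x t
      have h1 : HasFDerivAt ψ (fderiv ℝ ψ (x, t)) (x, t) :=
        ((hψ.differentiable (by simp)).differentiableAt).hasFDerivAt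
      exact h1.comp_hasDerivAt x ((hasDerivAt_id x).prodMk (hasDerivAt_const x t))
    have hd : ∀ t₀ : ℝ, HasDerivAt (fun t => ∫ s in (0:ℝ)..1, ψ (t, s))
        (∫ s in (0:ℝ)..1, ψ' (t₀, s)) t₀ := by
      intro t₀
      obtain ⟨C, hC⟩ := ((isCompact_closedBall t₀ 1).prod (isCompact_Icc (a := (0:ℝ)) (b := 1))
        ).exists_bound_of_continuousOn hψ'c.continuous.continuousOn
      refine (intervalIntegral.hasDerivAt_integral_of_dominated_loc_of_deriv_le
        (μ := MeasureTheory.volume) (bound := fun _ => C)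
        (Metric.ball_mem_nhds t₀ one_pos)
        (Filter.Eventually.of_forall fun x =>
          (hψ.continuous.comp (continuous_const.prodMk continuous_id)).aestronglyMeasurable)
        ((hψ.continuous.comp (continuous_const.prodMk continuous_id)).intervalIntegrable _ _)
        ((hψ'c.continuous.comp (continuous_const.prodMk continuous_id)).aestronglyMeasurable)
        (Filter.Eventually.of_forall fun t ht x hx => hC (x, t) ⟨Metric.ball_subset_closedBall hx, ?_⟩)
        intervalIntegrable_const
        (Filter.Eventually.of_forall fun t _ x _ => hderiv x t)).2
      rw [Set.uIoc_of_le zero_le_one] at ht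
      exact ⟨ht.1.le, ht.2⟩
    have hdiff : Differentiable ℝ (fun t => ∫ s in (0:ℝ)..1, ψ (t, s)) :=
      fun t => (hd t).differentiableAt
    have hderiv_eq : deriv (fun t => ∫ s in (0:ℝ)..1, ψ (t, s))
        = fun t => ∫ s in (0:ℝ)..1, ψ' (t, s) := funext fun t => (hd t).deriv
    rw [Nat.cast_succ, contDiff_succ_iff_deriv]
    refine ⟨hdiff, by simp, ?_⟩
    rw [hderiv_eq]
    exact ih ψ' hψ'c

/-- `dslope` of an everywhere-analytic function is everywhere analytic. -/
lemma PLM.contDiff_dslope {E : Type*} [NormedAddCommGroup E] [NormedSpace ℝ E]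
    [CompleteSpace E] {f : ℝ → E} (hf : ContDiff ℝ (⊤ : ℕ∞) f) :
    ContDiff ℝ (⊤ : ℕ∞) (dslope f 0) := by
  set ψ : ℝ × ℝ → E := fun q => fderiv ℝ f (q.1 * q.2) 1 with hψdef
  have hψ : ContDiff ℝ (⊤ : ℕ∞) ψ :=
    ((hf.fderiv_right (m := (⊤ : ℕ∞)) (by simp)).comp (contDiff_fst.mul contDiff_snd)).clm_apply
      contDiff_const
  have hdiff : Differentiable ℝ f := hf.differentiable (by simp)
  have hcont : Continuous (deriv f) := hf.continuous_deriv (by simp)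
  have heq : dslope f 0 = fun t => ∫ s in (0:ℝ)..1, ψ (t, s) := by
    funext t
    have e : (∫ s in (0:ℝ)..1, ψ (t, s)) = ∫ s in (0:ℝ)..1, deriv f (t * s) := by
      simp [hψdef, fderiv_apply_one_eq_deriv]
    rw [e]
    rcases eq_or_ne t 0 with rfl | ht
    · simp [dslope_same]
    · rw [dslope_of_ne _ ht, slope_def_module,
        intervalIntegral.integral_comp_mul_left (fun x => deriv f x) ht, mul_zero, mul_one,
        intervalIntegral.integral_deriv_eq_sub (fun x _ => hdiff x) (hcont.intervalIntegrable _ _)]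
      simp
  rw [heq]
  exact contDiff_infty.2 fun n => PLM.contDiff_intervalIntegral n ψ hψ

/-- Hadamard: an analytic `f` with `f 0 = 0` and `f' 0 = 0` factors as `t² • h t`. -/
lemma PLM.hadamard {E : Type*} [NormedAddCommGroup E] [NormedSpace ℝ E] [CompleteSpace E]
    {f : ℝ → E} (hf : ContDiff ℝ (⊤ : ℕ∞) f) (h0 : f 0 = 0) (h1 : deriv f 0 = 0) :
    ∃ h : ℝ → E, ContDiff ℝ (⊤ : ℕ∞) h ∧ ∀ t, f t = t ^ 2 • h t := by
  have hg : ContDiff ℝ (⊤ : ℕ∞) (dslope f 0) := PLM.contDiff_dslope hf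
  refine ⟨dslope (dslope f 0) 0, PLM.contDiff_dslope hg, fun t => ?_⟩
  have e1 : t • dslope f 0 t = f t := by simpa [h0] using sub_smul_dslope f 0 t
  have hg0 : dslope f 0 0 = 0 := by rw [dslope_same]; exact h1
  have e2 : t • dslope (dslope f 0) 0 t = dslope f 0 t := by
    simpa [dslope_same, h1] using sub_smul_dslope (dslope f 0) 0 t
  rw [← e1, ← e2, smul_smul, pow_two]

end AuxLemmas

section Main

variable {E F : Type*} [NormedAddCommGroup E] [NormedSpace ℝ E] [FiniteDimensional ℝ E]
  [NormedAddCommGroup F] [NormedSpace ℝ F] [FiniteDimensional ℝ F]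
  {x : E} {p : F}

/-- The lift of a smooth path is smooth. -/
lemma PathLiftingMap.lift_contDiff (Φ : PathLiftingMap E F x p) {γ : ℝ → E}
    (hγ : ContDiff ℝ (⊤ : ℕ∞) γ) (hγ0 : γ 0 = x) : ContDiff ℝ (⊤ : ℕ∞) (Φ.lift γ) := by
  have h := Φ.lift_smooth_families 0 (fun q => γ q.2) (hγ.comp contDiff_snd)
    (fun _ => hγ0)
  have h2 : ContDiff ℝ (⊤ : ℕ∞) (fun t : ℝ =>
      (fun q : EuclideanSpace ℝ (Fin 0) × ℝ => Φ.lift (fun t => γ t) q.2)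
        ((0 : EuclideanSpace ℝ (Fin 0)), t)) :=
    h.comp (contDiff_const.prodMk contDiff_id)
  exact h2

/-- The scaling property at the level of initial velocities. -/
lemma PathLiftingMap.lift_scale_deriv (Φ : PathLiftingMap E F x p) {γ : ℝ → E}
    (hγ : ContDiff ℝ (⊤ : ℕ∞) γ) (hγ0 : γ 0 = x) {ε : ℝ} (hε : ε ∈ Set.Icc (0:ℝ) 1) :
    deriv (Φ.lift (fun t => γ (ε * t))) 0 = ε • deriv (Φ.lift γ) 0 := by
  rw [Φ.lift_scale ε hε γ hγ hγ0]
  have hL : DifferentiableAt ℝ (Φ.lift γ) 0 :=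
    ((Φ.lift_contDiff hγ hγ0).differentiable (by simp)).differentiableAt
  have h1 : HasDerivAt (fun t : ℝ => ε * t) ε 0 := by
    simpa using (hasDerivAt_id (0:ℝ)).const_mul ε
  have h2 : HasDerivAt (Φ.lift γ) (deriv (Φ.lift γ) 0) (ε * 0) := by
    simpa using hL.hasDerivAt
  simpa [Function.comp_def] using (h2.scomp 0 h1).deriv

/-- Packaging of `lift_smooth_families`: for a smooth family `A` the initial velocity of
the lift of each member depends smoothly on the parameter. -/
lemma PathLiftingMap.family_deriv (Φ : PathLiftingMap E F x p) {k : ℕ}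
    (A : EuclideanSpace ℝ (Fin k) × ℝ → E) (hA : ContDiff ℝ (⊤ : ℕ∞) A)
    (hA0 : ∀ s, A (s, 0) = x) :
    ∃ g : EuclideanSpace ℝ (Fin k) → F, ContDiff ℝ (⊤ : ℕ∞) g ∧
      ∀ q, g q = deriv (Φ.lift (fun t => A (q, t))) 0 := by
  have hG := Φ.lift_smooth_families k A hA hA0
  set G : EuclideanSpace ℝ (Fin k) × ℝ → F :=
    fun q => Φ.lift (fun t => A (q.1, t)) q.2 with hGdef
  refine ⟨fun q => fderiv ℝ G (q, 0) (0, 1), ?_, ?_⟩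
  · have hfd : ContDiff ℝ (⊤ : ℕ∞) (fderiv ℝ G) := hG.fderiv_right (by simp)
    exact (hfd.comp (contDiff_id.prodMk contDiff_const)).clm_apply contDiff_const
  · intro q
    have h1 : HasFDerivAt G (fderiv ℝ G (q, 0)) (q, 0) :=
      ((hG.differentiable (by simp)).differentiableAt).hasFDerivAt
    have h2 : HasDerivAt (fun t : ℝ => ((q, t) : EuclideanSpace ℝ (Fin k) × ℝ))
        ((0 : EuclideanSpace ℝ (Fin k)), (1:ℝ)) 0 :=
      (hasDerivAt_const 0 q).prodMk (hasDerivAt_id 0)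
    have h3 : HasDerivAt (fun t : ℝ => G (q, t)) (fderiv ℝ G (q, 0) (0, 1)) 0 :=
      h1.comp_hasDerivAt 0 h2
    exact h3.deriv.symm

/-- Additivity of initial lift-velocities. -/
lemma PathLiftingMap.lift_deriv_add (Φ : PathLiftingMap E F x p) {α β : ℝ → E}
    (hα : ContDiff ℝ (⊤ : ℕ∞) α) (hβ : ContDiff ℝ (⊤ : ℕ∞) β) (hα0 : α 0 = x) (hβ0 : β 0 = x) :
    deriv (Φ.lift (fun t => α t + β t - x)) 0
      = deriv (Φ.lift α) 0 + deriv (Φ.lift β) 0 := by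
  set A : EuclideanSpace ℝ (Fin 2) × ℝ → E :=
    fun q => α (q.1 0 * q.2) + β (q.1 1 * q.2) - x with hAdef
  have hproj0 : ContDiff ℝ (⊤ : ℕ∞) (fun q : EuclideanSpace ℝ (Fin 2) × ℝ => q.1 0) :=
    contDiff_euclidean.mp contDiff_fst 0
  have hproj1 : ContDiff ℝ (⊤ : ℕ∞) (fun q : EuclideanSpace ℝ (Fin 2) × ℝ => q.1 1) :=
    contDiff_euclidean.mp contDiff_fst 1
  have hA : ContDiff ℝ (⊤ : ℕ∞) A :=
    (((hα.comp (hproj0.mul contDiff_snd)).add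
      (hβ.comp (hproj1.mul contDiff_snd))).sub contDiff_const)
  have hA0 : ∀ s : EuclideanSpace ℝ (Fin 2), A (s, 0) = x := by
    intro s; simp [hAdef, hα0, hβ0]
  obtain ⟨g, hg, hgq⟩ := Φ.family_deriv A hA hA0
  set u : EuclideanSpace ℝ (Fin 2) := EuclideanSpace.single 0 1 with hu
  set v : EuclideanSpace ℝ (Fin 2) := EuclideanSpace.single 1 1 with hv
  have hgd : DifferentiableAt ℝ g 0 := ((hg.differentiable (by simp)).differentiableAt)
  have hline : ∀ w : EuclideanSpace ℝ (Fin 2), HasDerivAt (fun s : ℝ => s • w) w 0 := by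
    intro w; simpa using (hasDerivAt_id (0:ℝ)).smul_const w
  have hc0 : ∀ w : EuclideanSpace ℝ (Fin 2), (fun s : ℝ => s • w) 0 = 0 := by
    intro w; simp
  -- direction u : α
  have keyu : fderiv ℝ g 0 u = deriv (Φ.lift α) 0 := by
    refine PLM.key hgd (hline u) (hc0 u) ?_
    intro s hs
    have e : (fun t => A (s • u, t)) = (fun t => α (s * t)) := by
      funext t
      simp [hAdef, hu, EuclideanSpace.single_apply, hβ0]
    rw [hgq (s • u), e]
    exact Φ.lift_scale_deriv hα hα0 hs
  -- direction v : β
  have keyv : fderiv ℝ g 0 v = deriv (Φ.lift β) 0 := by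
    refine PLM.key hgd (hline v) (hc0 v) ?_
    intro s hs
    have e : (fun t => A (s • v, t)) = (fun t => β (s * t)) := by
      funext t
      simp [hAdef, hv, EuclideanSpace.single_apply, hα0]
    rw [hgq (s • v), e]
    exact Φ.lift_scale_deriv hβ hβ0 hs
  -- direction u + v : α + β - x
  have hγ : ContDiff ℝ (⊤ : ℕ∞) (fun t => α t + β t - x) := (hα.add hβ).sub contDiff_const
  have hγ0 : (fun t => α t + β t - x) 0 = x := by simp [hα0, hβ0]
  have keyuv : fderiv ℝ g 0 (u + v) = deriv (Φ.lift (fun t => α t + β t - x)) 0 := by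
    refine PLM.key hgd (hline (u + v)) (hc0 (u + v)) ?_
    intro s hs
    have e : (fun t => A (s • (u + v), t)) = (fun t => (fun t' => α t' + β t' - x) (s * t)) := by
      funext t
      simp [hAdef, hu, hv, EuclideanSpace.single_apply]
    rw [hgq (s • (u + v)), e]
    exact Φ.lift_scale_deriv hγ hγ0 hs
  rw [← keyu, ← keyv, ← keyuv, (fderiv ℝ g 0).map_add]

/-- Vanishing: a path with zero initial velocity lifts to a path with zero initial
velocity. -/
lemma PathLiftingMap.lift_deriv_zero (Φ : PathLiftingMap E F x p) {δ : ℝ → E}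
    (hδ : ContDiff ℝ (⊤ : ℕ∞) δ) (hδ0 : δ 0 = x) (hδ1 : deriv δ 0 = 0) :
    deriv (Φ.lift δ) 0 = 0 := by
  have hf : ContDiff ℝ (⊤ : ℕ∞) (fun t => δ t - x) := hδ.sub contDiff_const
  have hf0 : (fun t => δ t - x) 0 = 0 := by simp [hδ0]
  have hf1 : deriv (fun t => δ t - x) 0 = 0 := by
    rw [deriv_sub_const]; exact hδ1
  obtain ⟨h, hh, hfac⟩ := PLM.hadamard hf hf0 hf1
  set B : EuclideanSpace ℝ (Fin 2) × ℝ → E :=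
    fun q => x + (q.1 0 * q.2 ^ 2) • h (q.1 1 * q.2) with hBdef
  have hproj0 : ContDiff ℝ (⊤ : ℕ∞) (fun q : EuclideanSpace ℝ (Fin 2) × ℝ => q.1 0) :=
    contDiff_euclidean.mp contDiff_fst 0
  have hproj1 : ContDiff ℝ (⊤ : ℕ∞) (fun q : EuclideanSpace ℝ (Fin 2) × ℝ => q.1 1) :=
    contDiff_euclidean.mp contDiff_fst 1
  have hB : ContDiff ℝ (⊤ : ℕ∞) B :=
    contDiff_const.add ((hproj0.mul (contDiff_snd.pow 2)).smul
      (hh.comp (hproj1.mul contDiff_snd)))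
  have hB0 : ∀ s : EuclideanSpace ℝ (Fin 2), B (s, 0) = x := by
    intro s; simp [hBdef]
  obtain ⟨g, hg, hgq⟩ := Φ.family_deriv B hB hB0
  set u : EuclideanSpace ℝ (Fin 2) := EuclideanSpace.single 0 1 with hu
  set v : EuclideanSpace ℝ (Fin 2) := EuclideanSpace.single 1 1 with hv
  have hgd : DifferentiableAt ℝ g 0 := ((hg.differentiable (by simp)).differentiableAt)
  -- along the curve ε ↦ (ε², ε) the family is δ(ε t)
  have hc : HasDerivAt (fun ε : ℝ => ε ^ 2 • u + ε • v) v 0 := by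
    have h1 : HasDerivAt (fun ε : ℝ => ε ^ 2 • u) ((0:ℝ) • u) 0 := by
      simpa using ((hasDerivAt_pow 2 (0:ℝ)).smul_const u)
    have h2 : HasDerivAt (fun ε : ℝ => ε • v) v 0 := by
      simpa using (hasDerivAt_id (0:ℝ)).smul_const v
    simpa only [zero_smul, zero_add] using h1.fun_add h2
  have hc0 : (fun ε : ℝ => ε ^ 2 • u + ε • v) 0 = 0 := by simp
  have key1 : fderiv ℝ g 0 v = deriv (Φ.lift δ) 0 := by
    refine PLM.key hgd hc hc0 ?_
    intro ε hε
    have e : (fun t => B (ε ^ 2 • u + ε • v, t)) = (fun t => δ (ε * t)) := by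
      funext t
      have : (ε ^ 2 * 1 + ε * 0) * t ^ 2 = (ε * t) ^ 2 := by ring
      simp only [hBdef, hu, hv, PiLp.add_apply, PiLp.smul_apply,
        EuclideanSpace.single_apply, smul_eq_mul]
      norm_num
      rw [show ε ^ 2 * t ^ 2 = (ε * t) ^ 2 by ring, ← hfac (ε * t)]
      abel
    rw [hgq _, e]
    exact Φ.lift_scale_deriv hδ hδ0 hε
  have key2 : fderiv ℝ g 0 v = 0 := by
    have hline : HasDerivAt (fun s : ℝ => s • v) v 0 := by
      simpa using (hasDerivAt_id (0:ℝ)).smul_const v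
    refine PLM.key hgd hline (by simp) ?_
    intro s hs
    have e : (fun t => B (s • v, t)) = (fun _ : ℝ => x) := by
      funext t
      simp [hBdef, hu, hv, EuclideanSpace.single_apply]
    rw [hgq _, e, Φ.lift_const]
    simp
  rw [← key1, key2]

end Main

/-- The initial velocity of the lifted path depends only on the initial velocity of the
path downstairs. -/
theorem initial_velocity_of_lift_well_defined
    {E F : Type*} [NormedAddCommGroup E] [NormedSpace ℝ E] [FiniteDimensional ℝ E]
    [NormedAddCommGroup F] [NormedSpace ℝ F] [FiniteDimensional ℝ F]
    {x : E} {p : F} (Φ : PathLiftingMap E F x p)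
    (α β : ℝ → E) (hα : ContDiff ℝ (⊤ : ℕ∞) α) (hβ : ContDiff ℝ (⊤ : ℕ∞) β)
    (hα0 : α 0 = x) (hβ0 : β 0 = x) (h : deriv α 0 = deriv β 0) :
    deriv (Φ.lift α) 0 = deriv (Φ.lift β) 0 := by
  set δ : ℝ → E := fun t => α t - β t + x with hδdef
  have hδ : ContDiff ℝ (⊤ : ℕ∞) δ := (hα.sub hβ).add contDiff_const
  have hδ0 : δ 0 = x := by simp [hδdef, hα0, hβ0]
  have hδ1 : deriv δ 0 = 0 := by
    have d1 : DifferentiableAt ℝ α 0 := (hα.differentiable (by simp)).differentiableAt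
    have d2 : DifferentiableAt ℝ β 0 := (hβ.differentiable (by simp)).differentiableAt
    rw [hδdef]
    rw [deriv_add_const, deriv_fun_sub d1 d2, h, sub_self]
  have hzero : deriv (Φ.lift δ) 0 = 0 := Φ.lift_deriv_zero hδ hδ0 hδ1
  have hadd := Φ.lift_deriv_add hδ hβ hδ0 hβ0
  have heq : (fun t => δ t + β t - x) = α := by
    funext t; simp only [hδdef]; abel
  rw [heq] at hadd
  rw [hadd, hzero, zero_add]
end

section
/- Let E and F be finite-dimensional real normed vector spaces, x ∈ E, p ∈ F, and let Φ be a path-lifting map based at (x,p). Then for every smooth path α : ℝ → E with α(0) = x, the lifted path Φ α is smooth, and for every t ∈ ℝ the function ε ↦ Φ (fun u => α (ε*u)) t has right derivative at ε = 0 (derivative within [0,∞) at 0) equal to t • deriv (Φ α) 0. (This is the displayed computation in the proof of the Lemma: the differential of Φ at the constant path sends the tangent vector 'u ↦ u·v' to 'u ↦ u·(lift of v)'.) -/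
/-- The lifted path is smooth, and the differential of `Φ` at the constant path sends the
tangent vector `u ↦ u • v` to `u ↦ u • ṽ`, where `ṽ` is the lift of `v`: for each `t`, the
function `ε ↦ Φ (u ↦ α (ε * u)) t` has right derivative `t • deriv (Φ α) 0` at `ε = 0`. -/
theorem lift_smooth_and_scaling_derivative
    {E F : Type*} [NormedAddCommGroup E] [NormedSpace ℝ E] [FiniteDimensional ℝ E]
    [NormedAddCommGroup F] [NormedSpace ℝ F] [FiniteDimensional ℝ F]
    {x : E} {p : F} (Φ : PathLiftingMap E F x p)
    (α : ℝ → E) (hα : ContDiff ℝ (⊤ : ℕ∞) α) (hα0 : α 0 = x) :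
    ContDiff ℝ (⊤ : ℕ∞) (Φ.lift α) ∧
    ∀ t : ℝ, HasDerivWithinAt (fun ε : ℝ => Φ.lift (fun u => α (ε * u)) t)
      (t • deriv (Φ.lift α) 0) (Set.Ici (0 : ℝ)) 0 := by
  have hsmooth : ContDiff ℝ (⊤ : ℕ∞) (Φ.lift α) := by
    have h0 := Φ.lift_smooth_families 0 (fun q => α q.2)
      (hα.comp contDiff_snd) (fun _ => hα0)
    have := h0.comp (ContDiff.prodMk (contDiff_const (c := (0 : EuclideanSpace ℝ (Fin 0)))) contDiff_id)
    simpa [Function.comp_def] using this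
  refine ⟨hsmooth, fun t => ?_⟩
  have hdiff : DifferentiableAt ℝ (Φ.lift α) 0 :=
    (hsmooth.differentiable (by simp)).differentiableAt
  have hg : HasDerivAt (fun ε : ℝ => ε * t) t 0 := hasDerivAt_mul_const t
  have hcomp : HasDerivAt (fun ε : ℝ => Φ.lift α (ε * t)) (t • deriv (Φ.lift α) 0) 0 := by
    have h0 : HasDerivAt (Φ.lift α) (deriv (Φ.lift α) 0) ((0:ℝ) * t) := by
      simpa using hdiff.hasDerivAt
    have := h0.scomp 0 hg
    simpa [Function.comp_def] using this
  refine hcomp.hasDerivWithinAt.congr_of_eventuallyEq ?_ ?_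
  · have h1 : ∀ᶠ ε in nhdsWithin (0:ℝ) (Set.Ici 0), ε ∈ Set.Ici (0:ℝ) :=
      eventually_mem_nhdsWithin
    have h2 : ∀ᶠ ε in nhdsWithin (0:ℝ) (Set.Ici 0), ε ≤ 1 := by
      apply eventually_nhdsWithin_of_eventually_nhds
      filter_upwards [Metric.ball_mem_nhds (0:ℝ) one_pos] with ε hε
      have := abs_lt.1 (by simpa [Real.dist_eq] using hε)
      linarith [this.2]
    filter_upwards [h1, h2] with ε hε0 hε1
    have := Φ.lift_scale ε ⟨hε0, hε1⟩ α hα hα0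
    exact congrFun this t
  · simp only [zero_mul, hα0, Φ.lift_const, Φ.lift_init α hα hα0]
end

section
/- Let U ⊆ ℝ^m be open, n ≥ 1, and let ω : U → (ℝ^m →L[ℝ] Matrix (Fin n) (Fin n) ℝ) be a smooth connection 1-form, with parallel transport T^ω. Then T^ω is invariant under reparametrization: for every smooth path γ : ℝ → U, every smooth σ : ℝ → ℝ, and all a, b ∈ ℝ, one has T^ω (γ ∘ σ) a b = T^ω γ (σ a) (σ b). -/
/-!
Both `t ↦ T (γ ∘ σ) a t` and `t ↦ T γ (σ a) (σ t)` solve the transport equation along `γ ∘ σ`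
(the second by the chain rule `(γ ∘ σ)' = σ' • γ' ∘ σ` and linearity of `ω`), and both equal `1`
at `t = a`. The transport equation is a linear ODE with continuous coefficients, so by Grönwall
its solutions are determined by their value at one time.
-/

open Set

attribute [local instance] Matrix.normedAddCommGroup Matrix.normedSpace

theorem linear_ODE_solution_unique {E : Type*} [NormedAddCommGroup E] [NormedSpace ℝ E]
    {A : ℝ → E →L[ℝ] E} (hA : Continuous A) {f g : ℝ → E}
    (hf : ∀ t, HasDerivAt f (A t (f t)) t) (hg : ∀ t, HasDerivAt g (A t (g t)) t)
    {t₀ : ℝ} (h : f t₀ = g t₀) : f = g := by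
  ext t
  obtain ⟨c, d, ht, ht₀⟩ : ∃ c d : ℝ, t ∈ Ioo c d ∧ t₀ ∈ Ioo c d :=
    ⟨min t t₀ - 1, max t t₀ + 1, by constructor <;> constructor <;> grind⟩
  obtain ⟨C, hC⟩ := isCompact_Icc.exists_bound_of_continuousOn (hA.continuousOn (s := Icc c d))
  have hlip : ∀ s ∈ Ioo c d, LipschitzOnWith C.toNNReal (A s) univ := fun s hs => by
    refine ((A s).lipschitz.weaken ?_).lipschitzOnWith
    rw [← norm_toNNReal]
    exact Real.toNNReal_mono (hC s (Ioo_subset_Icc_self hs))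
  exact ODE_solution_unique_of_mem_Ioo hlip ht₀ (fun s _ => ⟨hf s, mem_univ _⟩)
    (fun s _ => ⟨hg s, mem_univ _⟩) h ht

section ParallelTransport

variable {E ι : Type*} [NormedAddCommGroup E] [NormedSpace ℝ E] [Fintype ι]

theorem Matrix.mul_left_ODE_solution_unique {B : ℝ → Matrix ι ι ℝ} (hB : Continuous B)
    {F G : ℝ → Matrix ι ι ℝ} (hF : ∀ t, HasDerivAt F (B t * F t) t)
    (hG : ∀ t, HasDerivAt G (B t * G t) t) {t₀ : ℝ} (h : F t₀ = G t₀) : F = G := by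
  let mulLeft : Matrix ι ι ℝ →ₗ[ℝ] Matrix ι ι ℝ →L[ℝ] Matrix ι ι ℝ :=
    LinearMap.toContinuousLinearMap.toLinearMap ∘ₗ LinearMap.mul ℝ (Matrix ι ι ℝ)
  exact linear_ODE_solution_unique (A := fun t => mulLeft (B t))
    (mulLeft.continuous_of_finiteDimensional.comp hB) hF hG h

def IsParallelAlong (ω : E → E →L[ℝ] Matrix ι ι ℝ) (γ : ℝ → E) (F : ℝ → Matrix ι ι ℝ) : Prop :=
  ∀ t, HasDerivAt F (ω (γ t) (deriv γ t) * F t) t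

namespace IsParallelAlong

variable {ω : E → E →L[ℝ] Matrix ι ι ℝ} {γ : ℝ → E} {F G : ℝ → Matrix ι ι ℝ}

theorem unique (hωγ : Continuous fun t => ω (γ t) (deriv γ t)) (hF : IsParallelAlong ω γ F)
    (hG : IsParallelAlong ω γ G) {t₀ : ℝ} (h : F t₀ = G t₀) : F = G :=
  Matrix.mul_left_ODE_solution_unique hωγ hF hG h

theorem comp (hF : IsParallelAlong ω γ F) (hγ : Differentiable ℝ γ) {σ : ℝ → ℝ}
    (hσ : Differentiable ℝ σ) : IsParallelAlong ω (γ ∘ σ) (F ∘ σ) := by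
  intro t
  have hσ' := (hσ t).hasDerivAt
  have hγσ' : deriv (γ ∘ σ) t = deriv σ t • deriv γ (σ t) :=
    ((hγ (σ t)).hasDerivAt.scomp t hσ').deriv
  rw [Function.comp_apply, Function.comp_apply, hγσ', map_smul, smul_mul_assoc]
  exact (hF (σ t)).scomp t hσ'

end IsParallelAlong

end ParallelTransport

theorem parallelTransport_reparam_general (m n : ℕ)
    (U : Set (EuclideanSpace ℝ (Fin m)))
    (ω : EuclideanSpace ℝ (Fin m) →
      (EuclideanSpace ℝ (Fin m) →L[ℝ] Matrix (Fin n) (Fin n) ℝ))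
    (hω : @ContDiffOn ℝ _ _ _ _ _ ContinuousLinearMap.toNormedAddCommGroup
      ContinuousLinearMap.toNormedSpace ⊤ ω U)
    (T : (ℝ → EuclideanSpace ℝ (Fin m)) → ℝ → ℝ → Matrix (Fin n) (Fin n) ℝ)
    (hT : ∀ γ : ℝ → EuclideanSpace ℝ (Fin m), ContDiff ℝ ⊤ γ → (∀ t, γ t ∈ U) →
      ∀ a : ℝ, T γ a a = 1 ∧
        ∀ t : ℝ, HasDerivAt (T γ a) (ω (γ t) (deriv γ t) * T γ a t) t)
    (γ : ℝ → EuclideanSpace ℝ (Fin m)) (hγ : ContDiff ℝ ⊤ γ) (hγU : ∀ t, γ t ∈ U)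
    (σ : ℝ → ℝ) (hσ : ContDiff ℝ ⊤ σ) (a b : ℝ) :
    T (γ ∘ σ) a b = T γ (σ a) (σ b) := by
  have hγσ : ContDiff ℝ ⊤ (γ ∘ σ) := hγ.comp hσ
  have hγσU : ∀ t, (γ ∘ σ) t ∈ U := fun t => hγU (σ t)
  have hcoeff : Continuous fun t => ω ((γ ∘ σ) t) (deriv (γ ∘ σ) t) :=
    (hω.continuousOn.comp_continuous hγσ.continuous hγσU).clm_apply
      (hγσ.continuous_deriv le_top)
  obtain ⟨hTγσ_init, hTγσ⟩ := hT (γ ∘ σ) hγσ hγσU a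
  obtain ⟨hTγ_init, hTγ⟩ := hT γ hγ hγU (σ a)
  have hTγ_comp : IsParallelAlong ω (γ ∘ σ) (T γ (σ a) ∘ σ) :=
    IsParallelAlong.comp hTγ (hγ.differentiable (by simp)) (hσ.differentiable (by simp))
  exact congrFun (IsParallelAlong.unique hcoeff hTγσ hTγ_comp
    (t₀ := a) (by rw [Function.comp_apply, hTγσ_init, hTγ_init])) b

/-- The parallel transport `T^ω` of a smooth connection 1-form `ω` on the trivial rank-`n`
bundle over an open set `U ⊆ ℝ^m` (characterized by the defining linear ODE
`T γ a a = 1`, `∂/∂b (T γ a b) = ω (γ b) (γ' b) * T γ a b`) is invariant under smooth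
reparametrizations: `T (γ ∘ σ) a b = T γ (σ a) (σ b)`. -/
theorem parallelTransport_reparam (m n : ℕ) (hn : 1 ≤ n)
    (U : Set (EuclideanSpace ℝ (Fin m))) (hU : IsOpen U)
    (ω : EuclideanSpace ℝ (Fin m) →
      (EuclideanSpace ℝ (Fin m) →L[ℝ] Matrix (Fin n) (Fin n) ℝ))
    (hω : @ContDiffOn ℝ _ _ _ _ _ ContinuousLinearMap.toNormedAddCommGroup
      ContinuousLinearMap.toNormedSpace ⊤ ω U)
    (T : (ℝ → EuclideanSpace ℝ (Fin m)) → ℝ → ℝ → Matrix (Fin n) (Fin n) ℝ)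
    (hT : ∀ γ : ℝ → EuclideanSpace ℝ (Fin m), ContDiff ℝ ⊤ γ → (∀ t, γ t ∈ U) →
      ∀ a : ℝ, T γ a a = 1 ∧
        ∀ t : ℝ, HasDerivAt (T γ a) (ω (γ t) (deriv γ t) * T γ a t) t)
    (γ : ℝ → EuclideanSpace ℝ (Fin m)) (hγ : ContDiff ℝ ⊤ γ) (hγU : ∀ t, γ t ∈ U)
    (σ : ℝ → ℝ) (hσ : ContDiff ℝ ⊤ σ) (a b : ℝ) :
    T (γ ∘ σ) a b = T γ (σ a) (σ b) :=
  parallelTransport_reparam_general m n U ω hω T hT γ hγ hγU σ hσ a b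
end
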